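/- (Uniqueness via Gronwall.) Let u₁, u₂ solve the viscous system with δ > 0 on (ε,T), both uniformly bounded above and strictly separated from 0, with ∇w₂ ∈ L²(ε,T;L³(Ω)). Set u = u₁-u₂, w = w₁-w₂. If (1/2)(d/dt)‖∇u‖² + α‖∇w‖² + δ‖u_t‖² ≤ c‖u‖‖u_t‖ + (α/2)‖∇w‖² + c‖u‖²_{H¹}‖∇w₂‖²_{L³} holds a.e. on (ε,T), u has conserved zero spatial mean, and u(ε) = 0, then u ≡ 0 on (ε,T). -/
import Mathlib


open MeasureTheory

/-- uniqueness via Gronwall. With `y(t) = ‖∇u(t)‖²`, `N = ‖u‖`,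
`Nt = ‖u_t‖`, `Gw = ‖∇w‖`, `H1 = ‖u‖_{H¹}`, `G2 = ‖∇w₂‖_{L³}` for the difference
`u = u₁ - u₂`, `w = w₁ - w₂` of two solutions of the viscous system (`δ > 0`): if the
differential inequality
`(1/2) y' + α Gw² + δ Nt² ≤ c N Nt + (α/2) Gw² + c H1² G2²` holds a.e. on `(ε,T)`,
`u` has conserved zero spatial mean (giving the Poincaré inequality `H1 ≤ C √y` and
`N ≤ H1`), `G2² ∈ L¹(ε,T)` and `y(ε) = 0`, then `y ≡ 0` on `[ε,T]`. -/
theorem stmt_19 (ε T α δ c C : ℝ) (hεT : ε < T)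
    (hα : 0 < α) (hδ : 0 < δ) (hc : 0 ≤ c) (hC : 0 < C)
    (y y' N Nt Gw H1 G2 : ℝ → ℝ)
    (hy0 : ∀ t : ℝ, 0 ≤ y t)
    (hN : ∀ t : ℝ, 0 ≤ N t) (hNt : ∀ t : ℝ, 0 ≤ Nt t)
    (hGw : ∀ t : ℝ, 0 ≤ Gw t) (hH1 : ∀ t : ℝ, 0 ≤ H1 t) (hG2 : ∀ t : ℝ, 0 ≤ G2 t)
    (hFTC : ∀ a b : ℝ, ε ≤ a → a ≤ b → b ≤ T →
      IntegrableOn y' (Set.Icc a b) ∧ y b - y a = ∫ t in a..b, y' t)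
    (hineq : ∀ᵐ t ∂(volume : Measure ℝ), t ∈ Set.Ioo ε T →
      (1 / 2) * y' t + α * (Gw t) ^ 2 + δ * (Nt t) ^ 2
        ≤ c * N t * Nt t + (α / 2) * (Gw t) ^ 2 + c * (H1 t) ^ 2 * (G2 t) ^ 2)
    (hPoin : ∀ t ∈ Set.Icc ε T, H1 t ≤ C * Real.sqrt (y t))
    (hNH1 : ∀ t ∈ Set.Icc ε T, N t ≤ H1 t)
    (hG2int : IntegrableOn (fun t => (G2 t) ^ 2) (Set.Ioo ε T))
    (hyε : y ε = 0) :
    ∀ t ∈ Set.Icc ε T, y t = 0 := by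
  -- the Gronwall coefficient
  set g : ℝ → ℝ := fun t => 2 * C ^ 2 * (c ^ 2 / (4 * δ)) + 2 * C ^ 2 * c * (G2 t) ^ 2 with hg
  have hg0 : ∀ t, 0 ≤ g t := by
    intro t
    have h1 : 0 ≤ 2 * C ^ 2 * (c ^ 2 / (4 * δ)) := by positivity
    have h2 : 0 ≤ 2 * C ^ 2 * c * (G2 t) ^ 2 := by positivity
    simpa [hg] using add_nonneg h1 h2
  -- a.e. differential inequality y' ≤ g y on (ε, T)
  have hgy : ∀ᵐ t ∂(volume : Measure ℝ), t ∈ Set.Ioo ε T → y' t ≤ g t * y t := by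
    filter_upwards [hineq] with t ht htm
    have hineqt := ht htm
    have htIcc : t ∈ Set.Icc ε T := ⟨htm.1.le, htm.2.le⟩
    have hP := hPoin t htIcc
    have hNle := hNH1 t htIcc
    have hsq : Real.sqrt (y t) ^ 2 = y t := Real.sq_sqrt (hy0 t)
    have hH1sq : (H1 t) ^ 2 ≤ C ^ 2 * y t := by
      nlinarith [hH1 t, Real.sqrt_nonneg (y t), hC.le]
    have hNsq : (N t) ^ 2 ≤ C ^ 2 * y t := by
      nlinarith [hN t, hH1 t, Real.sqrt_nonneg (y t), hC.le]
    -- Young: c N Nt ≤ δ Nt² + c² N² / (4 δ)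
    have h4δ : 0 < 4 * δ := by linarith
    have hYoung : c * N t * Nt t - δ * (Nt t) ^ 2 ≤ c ^ 2 * (N t) ^ 2 / (4 * δ) := by
      rw [le_div_iff₀ h4δ]
      nlinarith [sq_nonneg (2 * δ * Nt t - c * N t)]
    have hGsq : c * (H1 t) ^ 2 * (G2 t) ^ 2 ≤ c * (C ^ 2 * y t) * (G2 t) ^ 2 := by
      have := mul_le_mul_of_nonneg_left hH1sq hc
      exact mul_le_mul_of_nonneg_right this (sq_nonneg _)
    have hN2 : c ^ 2 * (N t) ^ 2 / (4 * δ) ≤ c ^ 2 * (C ^ 2 * y t) / (4 * δ) := by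
      apply div_le_div_of_nonneg_right ?_ (by linarith) |>.trans_eq rfl
      nlinarith [sq_nonneg c]
    have hGw2 : 0 ≤ (α / 2) * (Gw t) ^ 2 := by positivity
    have hfinal : (1 / 2) * y' t ≤ c ^ 2 * (C ^ 2 * y t) / (4 * δ)
        + c * (C ^ 2 * y t) * (G2 t) ^ 2 := by linarith
    calc y' t = 2 * ((1 / 2) * y' t) := by ring
      _ ≤ 2 * (c ^ 2 * (C ^ 2 * y t) / (4 * δ) + c * (C ^ 2 * y t) * (G2 t) ^ 2) := by
          linarith
      _ = g t * y t := by simp only [hg]; ring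
  have hTnull : ∀ᵐ t ∂(volume : Measure ℝ), t ≠ T := by
    rw [ae_iff]
    simpa using measure_singleton T
  -- integrability of g on Icc ε T
  have hgInt : IntegrableOn g (Set.Icc ε T) := by
    rw [integrableOn_Icc_iff_integrableOn_Ioo]
    exact (integrable_const _).add ((hG2int.const_mul _))
  -- integrability of y'
  have hy'Int : IntegrableOn y' (Set.Icc ε T) := (hFTC ε T le_rfl hεT.le le_rfl).1
  -- continuity of y on [ε, T]
  have hyrepr : ∀ x ∈ Set.Icc ε T, y x = ∫ t in Set.Ioc ε x, y' t := by
    intro x hx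
    have h := (hFTC ε x le_rfl hx.1 hx.2).2
    rw [hyε, intervalIntegral.integral_of_le hx.1] at h
    linarith
  have hycont : ContinuousOn y (Set.Icc ε T) := by
    have := intervalIntegral.continuousOn_primitive (f := y') (μ := volume) hy'Int
    exact this.congr hyrepr
  -- key step: propagate zero over an interval with small ∫ g
  have key : ∀ a b : ℝ, ε ≤ a → a ≤ b → b ≤ T → y a = 0 →
      (∫ t in Set.Ioc a b, g t) < 1 / 2 → ∀ s ∈ Set.Icc a b, y s = 0 := by
    intro a b hεa hab hbT hya hsmall
    have hsub : Set.Icc a b ⊆ Set.Icc ε T := Set.Icc_subset_Icc hεa hbT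
    obtain ⟨s₀, hs₀, hmax⟩ := isCompact_Icc.exists_isMaxOn (Set.nonempty_Icc.2 hab)
      (hycont.mono hsub)
    have hmax' : ∀ s ∈ Set.Icc a b, y s ≤ y s₀ := hmax
    -- y s₀ = ∫_{a}^{s₀} y'
    have hs₀T : s₀ ≤ T := le_trans hs₀.2 hbT
    have hrepr : y s₀ = ∫ t in Set.Ioc a s₀, y' t := by
      have h := (hFTC a s₀ hεa hs₀.1 hs₀T).2
      rw [hya, intervalIntegral.integral_of_le hs₀.1] at h
      linarith
    have hIy' : IntegrableOn y' (Set.Ioc a s₀) :=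
      hy'Int.mono_set (fun t ht => ⟨le_trans hεa ht.1.le, le_trans ht.2 hs₀T⟩)
    have hIg : IntegrableOn (fun t => g t * y s₀) (Set.Ioc a s₀) :=
      (hgInt.mono_set (fun t ht => ⟨le_trans hεa ht.1.le, le_trans ht.2 hs₀T⟩)).mul_const _
    have hmono : ∫ t in Set.Ioc a s₀, y' t ≤ ∫ t in Set.Ioc a s₀, g t * y s₀ := by
      apply setIntegral_mono_on_ae hIy' hIg measurableSet_Ioc
      filter_upwards [hgy, hTnull] with t hgyt htT htm
      have htIoo : t ∈ Set.Ioo ε T :=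
        ⟨lt_of_le_of_lt hεa htm.1, lt_of_le_of_ne (le_trans htm.2 hs₀T) htT⟩
      refine le_trans (hgyt htIoo) ?_
      have hyle : y t ≤ y s₀ := hmax' t ⟨htm.1.le, le_trans htm.2 hs₀.2⟩
      exact mul_le_mul_of_nonneg_left hyle (hg0 t)
    have hgmono : ∫ t in Set.Ioc a s₀, g t ≤ ∫ t in Set.Ioc a b, g t := by
      apply setIntegral_mono_set
      · exact hgInt.mono_set (fun t ht => ⟨le_trans hεa ht.1.le, le_trans ht.2 hbT⟩)
      · exact Filter.Eventually.of_forall (fun t => hg0 t)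
      · exact Filter.Eventually.of_forall (Set.Ioc_subset_Ioc le_rfl hs₀.2)
    have hfin : y s₀ ≤ (∫ t in Set.Ioc a b, g t) * y s₀ := by
      calc y s₀ = ∫ t in Set.Ioc a s₀, y' t := hrepr
        _ ≤ ∫ t in Set.Ioc a s₀, g t * y s₀ := hmono
        _ = (∫ t in Set.Ioc a s₀, g t) * y s₀ := by rw [integral_mul_const]
        _ ≤ (∫ t in Set.Ioc a b, g t) * y s₀ :=
            mul_le_mul_of_nonneg_right hgmono (hy0 s₀)
    have hys0 : y s₀ = 0 := by nlinarith [hy0 s₀, hfin, hsmall]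
    intro s hs
    exact le_antisymm (hys0 ▸ hmax' s hs) (hy0 s)
  -- the supremum of the zero set
  set S : Set ℝ := {t | t ∈ Set.Icc ε T ∧ ∀ s ∈ Set.Icc ε t, y s = 0} with hS
  have hεS : ε ∈ S := ⟨⟨le_rfl, hεT.le⟩, fun s hs => by
    have : s = ε := le_antisymm hs.2 hs.1
    rw [this, hyε]⟩
  have hSne : S.Nonempty := ⟨ε, hεS⟩
  have hSbdd : BddAbove S := ⟨T, fun t ht => ht.1.2⟩
  set t₀ : ℝ := sSup S with ht₀
  have hεt₀ : ε ≤ t₀ := le_csSup hSbdd hεS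
  have ht₀T : t₀ ≤ T := csSup_le hSne (fun t ht => ht.1.2)
  -- y vanishes on [ε, t₀]
  have hzero : ∀ s ∈ Set.Icc ε t₀, y s = 0 := by
    have hlt : ∀ s, ε ≤ s → s < t₀ → y s = 0 := by
      intro s hεs hst₀
      obtain ⟨t, htS, hst⟩ := exists_lt_of_lt_csSup hSne hst₀
      exact htS.2 s ⟨hεs, hst.le⟩
    have hyt₀ : y t₀ = 0 := by
      rcases eq_or_lt_of_le hεt₀ with h | h
      · rw [← h, hyε]
      · -- continuity from the left
        have hmem : t₀ ∈ Set.Icc ε T := ⟨hεt₀, ht₀T⟩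
        have hcw : Filter.Tendsto y (nhdsWithin t₀ (Set.Icc ε T)) (nhds (y t₀)) :=
          hycont t₀ hmem
        have hle : nhdsWithin t₀ (Set.Ico ε t₀) ≤ nhdsWithin t₀ (Set.Icc ε T) :=
          nhdsWithin_mono _ (fun t ht => ⟨ht.1, le_trans ht.2.le ht₀T⟩)
        have hNB : (nhdsWithin t₀ (Set.Ico ε t₀)).NeBot := by
          rw [← mem_closure_iff_nhdsWithin_neBot, closure_Ico (ne_of_lt h)]
          exact ⟨hεt₀, le_rfl⟩
        have h1 : Filter.Tendsto y (nhdsWithin t₀ (Set.Ico ε t₀)) (nhds (y t₀)) :=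
          hcw.mono_left hle
        have h2 : Filter.Tendsto y (nhdsWithin t₀ (Set.Ico ε t₀)) (nhds 0) := by
          apply Filter.Tendsto.congr' _ tendsto_const_nhds
          filter_upwards [eventually_mem_nhdsWithin] with t ht
          exact (hlt t ht.1 ht.2).symm
        exact tendsto_nhds_unique h1 h2
    intro s hs
    rcases lt_or_eq_of_le hs.2 with h | h
    · exact hlt s hs.1 h
    · rw [h, hyt₀]
  -- show t₀ = T
  have ht₀eq : t₀ = T := by
    by_contra hne
    have ht₀lt : t₀ < T := lt_of_le_of_ne ht₀T hne
    -- find t₁ > t₀ with small integral of g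
    set P : ℝ → ℝ := fun x => ∫ t in Set.Ioc t₀ x, g t with hP
    have hPcont : ContinuousOn P (Set.Icc t₀ T) :=
      intervalIntegral.continuousOn_primitive
        (hgInt.mono_set (Set.Icc_subset_Icc hεt₀ le_rfl))
    have hP0 : P t₀ = 0 := by simp [hP]
    have hcw : Filter.Tendsto P (nhdsWithin t₀ (Set.Icc t₀ T)) (nhds 0) := by
      have := hPcont t₀ ⟨le_rfl, ht₀T⟩
      rwa [ContinuousWithinAt, hP0] at this
    have hev : ∀ᶠ x in nhdsWithin t₀ (Set.Icc t₀ T), P x < 1 / 2 :=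
      hcw.eventually_lt_const (by norm_num)
    have hNB : (nhdsWithin t₀ (Set.Ioc t₀ T)).NeBot := by
      rw [← mem_closure_iff_nhdsWithin_neBot, closure_Ioc (ne_of_lt ht₀lt)]
      exact ⟨le_rfl, ht₀lt.le⟩
    have hev' : ∀ᶠ x in nhdsWithin t₀ (Set.Ioc t₀ T), P x < 1 / 2 :=
      hev.filter_mono (nhdsWithin_mono _ Set.Ioc_subset_Icc_self)
    obtain ⟨t₁, hPt₁, ht₁⟩ := (hev'.and eventually_mem_nhdsWithin).exists
    -- y vanishes on [t₀, t₁]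
    have hzero' : ∀ s ∈ Set.Icc t₀ t₁, y s = 0 :=
      key t₀ t₁ hεt₀ ht₁.1.le ht₁.2 (hzero t₀ ⟨hεt₀, le_rfl⟩) hPt₁
    -- so t₁ ∈ S, contradicting sSup
    have ht₁S : t₁ ∈ S := by
      refine ⟨⟨le_trans hεt₀ ht₁.1.le, ht₁.2⟩, fun s hs => ?_⟩
      rcases le_or_gt s t₀ with h | h
      · exact hzero s ⟨hs.1, h⟩
      · exact hzero' s ⟨h.le, hs.2⟩
    have := le_csSup hSbdd ht₁S
    exact absurd (lt_of_lt_of_le ht₁.1 this) (lt_irrefl t₀)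
  intro t ht
  exact hzero t ⟨ht.1, ht₀eq ▸ ht.2⟩
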